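/- arXiv:2111.02498 — 7 statements merged into one kernel-verified Lean document; each statement's English description precedes it below -/
import Mathlib

section
/- Suppose d(x,y) = a(x,y)/b(x,y) is a metric on a set X, where a and b are functions with positive values on pairs of distinct points. Then for any ε > 0, the function d̂(x,y) = a(x,y)/(b(x,y) + ε·a(x,y)) (with d̂(x,x)=0) is also a metric on X. -/
theorem stmt_2 {X : Type*} [DecidableEq X] (a b : X → X → ℝ)
    (ha_pos : ∀ x y, x ≠ y → 0 < a x y) (hb_pos : ∀ x y, x ≠ y → 0 < b x y)
    (ha_diag : ∀ x, a x x = 0)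
    (d : X → X → ℝ) (hd : ∀ x y, d x y = a x y / b x y)
    (d_nonneg : ∀ x y, 0 ≤ d x y)
    (d_eq_zero : ∀ x y, d x y = 0 ↔ x = y)
    (d_symm : ∀ x y, d x y = d y x)
    (d_triangle : ∀ x y z, d x y ≤ d x z + d z y)
    (ε : ℝ) (hε : 0 < ε)
    (dhat : X → X → ℝ)
    (hdhat : ∀ x y, dhat x y = if x = y then 0 else a x y / (b x y + ε * a x y)) :
    (∀ x y, 0 ≤ dhat x y) ∧
    (∀ x y, dhat x y = 0 ↔ x = y) ∧
    (∀ x y, dhat x y = dhat y x) ∧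
    (∀ x y z, dhat x y ≤ dhat x z + dhat z y) := by
  -- dhat x y = d x y / (1 + ε * d x y)
  have key : ∀ x y, dhat x y = d x y / (1 + ε * d x y) := by
    intro x y
    rw [hdhat]
    by_cases h : x = y
    · rw [if_pos h]
      have : d x y = 0 := (d_eq_zero x y).mpr h
      rw [this]; norm_num
    · rw [if_neg h, hd]
      have hb := hb_pos x y h
      have ha := ha_pos x y h
      have hpos : (0:ℝ) < b x y + ε * a x y := by positivity
      field_simp
  have hpos1 : ∀ s : ℝ, 0 ≤ s → (0:ℝ) < 1 + ε * s := by
    intro s hs; nlinarith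
  have mono : ∀ s t : ℝ, 0 ≤ s → s ≤ t → s / (1 + ε * s) ≤ t / (1 + ε * t) := by
    intro s t hs hst
    rw [div_le_div_iff₀ (hpos1 s hs) (hpos1 t (hs.trans hst))]
    nlinarith
  have subadd : ∀ s t : ℝ, 0 ≤ s → 0 ≤ t →
      (s + t) / (1 + ε * (s + t)) ≤ s / (1 + ε * s) + t / (1 + ε * t) := by
    intro s t hs ht
    have h1 := hpos1 s hs
    have h2 := hpos1 t ht
    have h3 := hpos1 (s + t) (by linarith)
    rw [div_add_div _ _ (ne_of_gt h1) (ne_of_gt h2),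
      div_le_div_iff₀ h3 (by positivity)]
    nlinarith [mul_nonneg hs ht, mul_nonneg (mul_nonneg hs ht) hε.le,
      mul_nonneg (mul_nonneg (mul_nonneg hs ht) hε.le) hε.le,
      mul_nonneg (mul_nonneg (mul_nonneg hs hs) ht) hε.le,
      mul_nonneg (mul_nonneg (mul_nonneg hs ht) ht) hε.le]
  refine ⟨?_, ?_, ?_, ?_⟩
  · intro x y
    rw [key]
    exact div_nonneg (d_nonneg x y) (hpos1 _ (d_nonneg x y)).le
  · intro x y
    rw [key]
    constructor
    · intro h
      have := div_eq_zero_iff.mp h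
      rcases this with h' | h'
      · exact (d_eq_zero x y).mp h'
      · exact absurd h' (ne_of_gt (hpos1 _ (d_nonneg x y)))
    · intro h
      rw [(d_eq_zero x y).mpr h]; norm_num
  · intro x y
    rw [key, key, d_symm]
  · intro x y z
    rw [key, key, key]
    calc d x y / (1 + ε * d x y)
        ≤ (d x z + d z y) / (1 + ε * (d x z + d z y)) :=
          mono _ _ (d_nonneg x y) (d_triangle x y z)
      _ ≤ d x z / (1 + ε * d x z) + d z y / (1 + ε * d z y) :=
          subadd _ _ (d_nonneg x z) (d_nonneg z y)
end

section
/- Let 0 ≤ α ≤ 1/2 and define δ(X,Y) = α·min(|X\Y|, |Y\X|) + (1-α)·max(|X\Y|, |Y\X|) for finite sets X, Y. Then δ satisfies the triangle inequality: δ(X,Y) ≤ δ(X,Z) + δ(Z,Y) for all finite sets X, Y, Z. -/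
lemma card_sdiff_triangle {ι : Type*} [DecidableEq ι] (X Y Z : Finset ι) :
    ((X \ Y).card : ℝ) ≤ (X \ Z).card + (Z \ Y).card := by
  have hsub : X \ Y ⊆ (X \ Z) ∪ (Z \ Y) := by
    intro x hx
    simp only [Finset.mem_sdiff, Finset.mem_union] at *
    by_cases hz : x ∈ Z
    · exact Or.inr ⟨hz, hx.2⟩
    · exact Or.inl ⟨hx.1, hz⟩
  have := (Finset.card_le_card hsub).trans (Finset.card_union_le _ _)
  exact_mod_cast this

theorem stmt_5 {ι : Type*} [DecidableEq ι] (α : ℝ) (h0 : 0 ≤ α) (h2 : α ≤ 1/2)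
    (δ : Finset ι → Finset ι → ℝ)
    (hδ : ∀ X Y : Finset ι, δ X Y =
      α * min ((X \ Y).card : ℝ) ((Y \ X).card : ℝ)
        + (1 - α) * max ((X \ Y).card : ℝ) ((Y \ X).card : ℝ)) :
    ∀ X Y Z : Finset ι, δ X Y ≤ δ X Z + δ Z Y := by
  intro X Y Z
  rw [hδ, hδ, hδ]
  set a : ℝ := ((X \ Y).card : ℝ)
  set b : ℝ := ((Y \ X).card : ℝ)
  set c1 : ℝ := ((X \ Z).card : ℝ)
  set c2 : ℝ := ((Z \ X).card : ℝ)
  set d1 : ℝ := ((Z \ Y).card : ℝ)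
  set d2 : ℝ := ((Y \ Z).card : ℝ)
  have ha : a ≤ c1 + d1 := card_sdiff_triangle X Y Z
  have hb : b ≤ d2 + c2 := card_sdiff_triangle Y X Z
  have e1 : min a b + max a b = a + b := min_add_max a b
  have e2 : min c1 c2 + max c1 c2 = c1 + c2 := min_add_max c1 c2
  have e3 : min d1 d2 + max d1 d2 = d1 + d2 := min_add_max d1 d2
  have hm : max a b ≤ max c1 c2 + max d1 d2 := by
    apply max_le
    · exact ha.trans (add_le_add (le_max_left _ _) (le_max_left _ _))
    · exact hb.trans (by linarith [le_max_right d1 d2, le_max_right c1 c2])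
  nlinarith [min_le_left a b, le_max_left a b]
end

section
/- Let 0 ≤ α ≤ 1 and β > 0, and define D_{α,β}(X,Y) = β·δ/(|X∩Y| + β·δ) where δ = α·min(|X\Y|,|Y\X|) + (1-α)·max(|X\Y|,|Y\X|) (and D = 0 when X = Y = ∅). If β < 1/(1-α), then D_{α,β} fails the triangle inequality on the sets X = {0}, Y = {1}, Z = {0,1}. -/
theorem stmt_7 (α β : ℝ) (h0 : 0 ≤ α) (h1 : α < 1) (hβ : 0 < β)
    (hlt : β < 1 / (1 - α))
    (δ : Finset ℕ → Finset ℕ → ℝ)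
    (hδ : ∀ X Y : Finset ℕ, δ X Y =
      α * min ((X \ Y).card : ℝ) ((Y \ X).card : ℝ)
        + (1 - α) * max ((X \ Y).card : ℝ) ((Y \ X).card : ℝ))
    (D : Finset ℕ → Finset ℕ → ℝ)
    (hD : ∀ X Y : Finset ℕ, D X Y =
      if X = ∅ ∧ Y = ∅ then 0
      else β * δ X Y / (((X ∩ Y).card : ℝ) + β * δ X Y)) :
    D {0} {1} > D {0} {0, 1} + D {0, 1} {1} := by
  have ha : (0:ℝ) < 1 - α := by linarith
  have ht : β * (1 - α) < 1 := by
    rw [lt_div_iff₀ ha] at hlt; linarith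
  have c1 : ((({0}:Finset ℕ) \ {1}).card : ℝ) = 1 := by exact_mod_cast rfl
  have c2 : ((({1}:Finset ℕ) \ {0}).card : ℝ) = 1 := by exact_mod_cast rfl
  have c3 : ((({0}:Finset ℕ) \ {0,1}).card : ℝ) = 0 := by exact_mod_cast rfl
  have c4 : ((({0,1}:Finset ℕ) \ {0}).card : ℝ) = 1 := by exact_mod_cast rfl
  have c5 : ((({0,1}:Finset ℕ) \ {1}).card : ℝ) = 1 := by exact_mod_cast rfl
  have c6 : ((({1}:Finset ℕ) \ {0,1}).card : ℝ) = 0 := by exact_mod_cast rfl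
  have i1 : ((({0}:Finset ℕ) ∩ {1}).card : ℝ) = 0 := by exact_mod_cast rfl
  have i2 : ((({0}:Finset ℕ) ∩ {0,1}).card : ℝ) = 1 := by exact_mod_cast rfl
  have i3 : ((({0,1}:Finset ℕ) ∩ {1}).card : ℝ) = 1 := by exact_mod_cast rfl
  have e1 : ({0}:Finset ℕ) ≠ ∅ := by decide
  have e2 : ({1}:Finset ℕ) ≠ ∅ := by decide
  have e3 : ({0,1}:Finset ℕ) ≠ ∅ := by decide
  rw [hD, hD, hD, hδ, hδ, hδ, c1, c2, c3, c4, c5, c6, i1, i2, i3]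
  simp only [e1, e2, e3, false_and, and_false, if_false]
  norm_num
  have hβa : 0 < β * (1 - α) := by positivity
  rw [div_add_div _ _ (by linarith) (by linarith), div_lt_div_iff₀ (by positivity) (by positivity)]
  ring_nf
  nlinarith [mul_pos hβ hβa, mul_pos hβa hβa]
end

section
/- Let 1/2 < α ≤ 1 and β > 0. Then there exist finite sets X, Y, Z for which D_{α,β}(X,Y) > D_{α,β}(X,Z) + D_{α,β}(Z,Y), where D_{α,β}(X,Y) = β·δ/(|X∩Y| + β·δ) with δ = α·min(|X\Y|,|Y\X|) + (1-α)·max(|X\Y|,|Y\X|). Specifically, one may take Z_n = {1,...,n}, Y = Z_n ∪ {n+1}, X = Z_n ∪ {n+2} for any n > β(1-α)/(2α-1). -/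
theorem stmt_8 (α β : ℝ) (h1 : 1/2 < α) (h2 : α ≤ 1) (hβ : 0 < β)
    (δ : Finset ℕ → Finset ℕ → ℝ)
    (hδ : ∀ X Y : Finset ℕ, δ X Y =
      α * min ((X \ Y).card : ℝ) ((Y \ X).card : ℝ)
        + (1 - α) * max ((X \ Y).card : ℝ) ((Y \ X).card : ℝ))
    (D : Finset ℕ → Finset ℕ → ℝ)
    (hD : ∀ X Y : Finset ℕ, D X Y =
      if X = ∅ ∧ Y = ∅ then 0
      else β * δ X Y / (((X ∩ Y).card : ℝ) + β * δ X Y)) :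
    ∀ n : ℕ, (n : ℝ) > β * (1 - α) / (2 * α - 1) →
      D (insert (n+2) (Finset.Icc 1 n)) (insert (n+1) (Finset.Icc 1 n)) >
        D (insert (n+2) (Finset.Icc 1 n)) (Finset.Icc 1 n)
          + D (Finset.Icc 1 n) (insert (n+1) (Finset.Icc 1 n)) := by
  intro n hn
  set Z := Finset.Icc 1 n with hZ
  set X := insert (n+2) Z with hX
  set Y := insert (n+1) Z with hY
  have h2a : (0:ℝ) < 2 * α - 1 := by linarith
  have h1a : (0:ℝ) ≤ 1 - α := by linarith
  have hrhs : (0:ℝ) ≤ β * (1 - α) / (2 * α - 1) :=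
    div_nonneg (mul_nonneg hβ.le h1a) h2a.le
  have hn1 : (1:ℝ) ≤ (n:ℝ) := by
    have : (0:ℝ) < (n:ℝ) := lt_of_le_of_lt hrhs hn
    exact_mod_cast Nat.one_le_iff_ne_zero.mpr (by exact_mod_cast this.ne')
  -- set computations
  have e1 : X \ Y = {n+2} := by
    ext x; simp [hX, hY, hZ, Finset.mem_sdiff, Finset.mem_insert, Finset.mem_Icc] <;> omega
  have e2 : Y \ X = {n+1} := by
    ext x; simp [hX, hY, hZ, Finset.mem_sdiff, Finset.mem_insert, Finset.mem_Icc] <;> omega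
  have e3 : X ∩ Y = Z := by
    ext x; simp [hX, hY, hZ, Finset.mem_inter, Finset.mem_insert, Finset.mem_Icc] <;> omega
  have e4 : X \ Z = {n+2} := by
    ext x; simp [hX, hZ, Finset.mem_sdiff, Finset.mem_insert, Finset.mem_Icc] <;> omega
  have e5 : Z \ X = ∅ := by
    ext x; simp [hX, hZ, Finset.mem_sdiff, Finset.mem_insert, Finset.mem_Icc] <;> omega
  have e6 : X ∩ Z = Z := by
    ext x; simp [hX, hZ, Finset.mem_inter, Finset.mem_insert, Finset.mem_Icc] <;> omega
  have e7 : Z \ Y = ∅ := by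
    ext x; simp [hY, hZ, Finset.mem_sdiff, Finset.mem_insert, Finset.mem_Icc] <;> omega
  have e8 : Y \ Z = {n+1} := by
    ext x; simp [hY, hZ, Finset.mem_sdiff, Finset.mem_insert, Finset.mem_Icc] <;> omega
  have e9 : Z ∩ Y = Z := by
    ext x; simp [hY, hZ, Finset.mem_inter, Finset.mem_insert, Finset.mem_Icc] <;> omega
  have hZcard : (Z.card : ℝ) = n := by
    simp [hZ, Nat.card_Icc]
  have dXY : δ X Y = 1 := by
    rw [hδ, e1, e2]; simp
  have dXZ : δ X Z = 1 - α := by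
    rw [hδ, e4, e5]; simp
  have dZY : δ Z Y = 1 - α := by
    rw [hδ, e7, e8]; simp
  have hXne : X ≠ ∅ := by simp [hX]
  have hYne : Y ≠ ∅ := by simp [hY]
  rw [hD, hD, hD, if_neg (by tauto), if_neg (by tauto), if_neg (by tauto),
    e3, e6, e9, dXY, dXZ, dZY, hZcard]
  have hd1 : (0:ℝ) < (n:ℝ) + β * 1 := by nlinarith
  have hd2 : (0:ℝ) < (n:ℝ) + β * (1 - α) := by nlinarith
  rw [div_add_div _ _ hd2.ne' hd2.ne', gt_iff_lt, div_lt_div_iff₀ (by nlinarith) hd1]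
  have key : β * (1 - α) < (n:ℝ) * (2 * α - 1) := by
    have := (div_lt_iff₀ h2a).mp hn
    linarith
  have h3 : (0:ℝ) < β * ((n:ℝ)*(2*α-1) - β*(1-α)) := mul_pos hβ (by linarith)
  nlinarith [mul_pos hd2 h3]
end

section
/- Suppose d is a nonnegative symmetric function on pairs of finite sets satisfying the triangle inequality, and a(X,Y) = |X∩Y|. If for all X, Y, Z we have a(X,Y) + d(Y,Z) ≥ a(X,Z), then for all X, Y, Z with the relevant denominators positive: d(X,Y)/(a(X,Y)+d(X,Y)) ≤ d(X,Z)/(a(X,Z)+d(X,Z)) + d(Y,Z)/(a(Y,Z)+d(Y,Z)). -/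
theorem stmt_12 {ι : Type*} [DecidableEq ι]
    (d : Finset ι → Finset ι → ℝ)
    (d_nonneg : ∀ X Y, 0 ≤ d X Y)
    (d_symm : ∀ X Y, d X Y = d Y X)
    (d_triangle : ∀ X Y Z, d X Y ≤ d X Z + d Z Y)
    (d_pos : ∀ X Y, X ≠ Y → 0 < d X Y)
    (a : Finset ι → Finset ι → ℝ)
    (ha : ∀ X Y, a X Y = ((X ∩ Y).card : ℝ))
    (key : ∀ X Y Z, a X Z ≤ a X Y + d Y Z) :
    ∀ X Y Z : Finset ι,
      0 < a X Y + d X Y → 0 < a X Z + d X Z → 0 < a Y Z + d Y Z →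
      d X Y / (a X Y + d X Y) ≤
        d X Z / (a X Z + d X Z) + d Y Z / (a Y Z + d Y Z) := by
  intro X Y Z h1 h2 h3
  set p := d X Y with hp
  set q := d X Z with hq
  set r := d Y Z with hr
  set α := a X Y with hα
  set β := a X Z with hβ
  set γ := a Y Z with hγ
  have hp0 : 0 ≤ p := d_nonneg X Y
  have hq0 : 0 ≤ q := d_nonneg X Z
  have hr0 : 0 ≤ r := d_nonneg Y Z
  have hα0 : 0 ≤ α := by rw [hα, ha]; positivity
  have hβ0 : 0 ≤ β := by rw [hβ, ha]; positivity
  have hγ0 : 0 ≤ γ := by rw [hγ, ha]; positivity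
  have htri : p ≤ q + r := by
    rw [hp, hq, hr]; have := d_triangle X Y Z
    rw [d_symm Z Y] at this; exact this
  -- a X Z ≤ a X Y + d Y Z : β ≤ α + r
  have k1 : β ≤ α + r := key X Y Z
  -- a Y Z ≤ a Y X + d X Z = α + q
  have k2 : γ ≤ α + q := by
    have := key Y X Z
    rw [show a Y X = α by rw [hα, ha, ha, Finset.inter_comm]] at this
    exact this
  have hd1 : (0:ℝ) < α + q + r := by
    have : α + p ≤ α + q + r := by linarith
    linarith
  -- step 1: p/(α+p) ≤ (q+r)/(α+q+r)
  have step1 : p / (α + p) ≤ (q + r) / (α + q + r) := by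
    rw [div_le_div_iff₀ h1 hd1]
    nlinarith
  have step2 : (q + r) / (α + q + r) = q / (α + q + r) + r / (α + q + r) := by
    ring
  have step3 : q / (α + q + r) ≤ q / (β + q) := by
    apply div_le_div_of_nonneg_left hq0 h2
    linarith
  have step4 : r / (α + q + r) ≤ r / (γ + r) := by
    apply div_le_div_of_nonneg_left hr0 h3
    linarith
  calc p / (α + p) ≤ (q + r) / (α + q + r) := step1
    _ = q / (α + q + r) + r / (α + q + r) := step2
    _ ≤ q / (β + q) + r / (γ + r) := add_le_add step3 step4
end

section
/- Let 0 ≤ α ≤ 1/2 and β ≥ 1/(1-α). Then D_{α,β}, defined on finite sets by D_{α,β}(X,Y) = β·δ/(|X∩Y| + β·δ) where δ = α·min(|X\Y|,|Y\X|) + (1-α)·max(|X\Y|,|Y\X|), and D_{α,β}(∅,∅) = 0, is a metric on the powerset of any finite set. -/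
/-- Key real-number lemma for the triangle inequality of the normalized distance. -/
lemma stmt13_key (c c1 c2 d d1 d2 : ℝ) (hc : 0 ≤ c) (hd : 0 ≤ d)
    (hd1 : 0 ≤ d1) (hd2 : 0 ≤ d2)
    (htri : d ≤ d1 + d2) (h1 : c1 ≤ c + d2) (h2 : c2 ≤ c + d1)
    (hp1 : 0 < c1 + d1) (hp2 : 0 < c2 + d2) :
    d / (c + d) ≤ d1 / (c1 + d1) + d2 / (c2 + d2) := by
  rcases eq_or_lt_of_le hd with h | h
  · rw [← h]
    simp only [zero_div, add_zero]
    exact add_nonneg (div_nonneg hd1 hp1.le) (div_nonneg hd2 hp2.le)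
  · have hcd : 0 < c + d := by linarith
    have hS : 0 < c + d1 + d2 := by linarith
    have step1 : d / (c + d) ≤ (d1 + d2) / (c + d1 + d2) := by
      rw [div_le_div_iff₀ hcd hS]; nlinarith
    have step2 : d1 / (c + d1 + d2) ≤ d1 / (c1 + d1) := by
      apply div_le_div_of_nonneg_left hd1 hp1; linarith
    have step3 : d2 / (c + d1 + d2) ≤ d2 / (c2 + d2) := by
      apply div_le_div_of_nonneg_left hd2 hp2; linarith
    calc d / (c + d) ≤ (d1 + d2) / (c + d1 + d2) := step1
      _ = d1 / (c + d1 + d2) + d2 / (c + d1 + d2) := by rw [add_div]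
      _ ≤ d1 / (c1 + d1) + d2 / (c2 + d2) := add_le_add step2 step3

theorem stmt_13 {ι : Type*} [Fintype ι] [DecidableEq ι]
    (α β : ℝ) (h0 : 0 ≤ α) (h2 : α ≤ 1/2) (hβ : 1 / (1 - α) ≤ β)
    (δ : Finset ι → Finset ι → ℝ)
    (hδ : ∀ X Y : Finset ι, δ X Y =
      α * min ((X \ Y).card : ℝ) ((Y \ X).card : ℝ)
        + (1 - α) * max ((X \ Y).card : ℝ) ((Y \ X).card : ℝ))
    (D : Finset ι → Finset ι → ℝ)
    (hD : ∀ X Y : Finset ι, D X Y =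
      if X = ∅ ∧ Y = ∅ then 0
      else β * δ X Y / (((X ∩ Y).card : ℝ) + β * δ X Y)) :
    (∀ X Y, 0 ≤ D X Y) ∧
    (∀ X Y, D X Y = 0 ↔ X = Y) ∧
    (∀ X Y, D X Y = D Y X) ∧
    (∀ X Y Z, D X Y ≤ D X Z + D Z Y) := by
  have hα1 : (0:ℝ) < 1 - α := by linarith
  have hβ1 : 1 ≤ β * (1 - α) := by
    rw [div_le_iff₀ hα1] at hβ; linarith
  have hβ0 : (0:ℝ) < β := by nlinarith
  -- δ is nonnegative
  have hδ0 : ∀ X Y : Finset ι, 0 ≤ δ X Y := by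
    intro X Y
    rw [hδ]
    have hm : (0:ℝ) ≤ min ((X \ Y).card : ℝ) ((Y \ X).card : ℝ) :=
      le_min (Nat.cast_nonneg _) (Nat.cast_nonneg _)
    have hM : min ((X \ Y).card : ℝ) ((Y \ X).card : ℝ)
        ≤ max ((X \ Y).card : ℝ) ((Y \ X).card : ℝ) := min_le_max
    nlinarith
  -- max of sdiff cards is at most β * δ
  have hMle : ∀ X Y : Finset ι,
      max ((X \ Y).card : ℝ) ((Y \ X).card : ℝ) ≤ β * δ X Y := by
    intro X Y
    rw [hδ]
    set m := min ((X \ Y).card : ℝ) ((Y \ X).card : ℝ) with hm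
    set M := max ((X \ Y).card : ℝ) ((Y \ X).card : ℝ) with hM
    have hm0 : (0:ℝ) ≤ m := le_min (Nat.cast_nonneg _) (Nat.cast_nonneg _)
    have hM0 : (0:ℝ) ≤ M := hm0.trans min_le_max
    nlinarith [mul_nonneg (mul_nonneg hβ0.le h0) hm0,
      mul_nonneg (sub_nonneg.mpr hβ1) hM0]
  -- δ is zero iff the sets are equal
  have hδeq : ∀ X Y : Finset ι, δ X Y = 0 → X = Y := by
    intro X Y h
    rw [hδ] at h
    set m := min ((X \ Y).card : ℝ) ((Y \ X).card : ℝ) with hm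
    set M := max ((X \ Y).card : ℝ) ((Y \ X).card : ℝ) with hM
    have hm0 : (0:ℝ) ≤ m := le_min (Nat.cast_nonneg _) (Nat.cast_nonneg _)
    have hM0 : (0:ℝ) ≤ M := hm0.trans min_le_max
    have hMz : M = 0 := by nlinarith
    have ha : ((X \ Y).card : ℝ) = 0 := by
      have := le_max_left ((X \ Y).card : ℝ) ((Y \ X).card : ℝ)
      rw [← hM] at this
      have := Nat.cast_nonneg (α := ℝ) (X \ Y).card
      linarith [hMz]
    have hb : ((Y \ X).card : ℝ) = 0 := by
      have := le_max_right ((X \ Y).card : ℝ) ((Y \ X).card : ℝ)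
      rw [← hM] at this
      have := Nat.cast_nonneg (α := ℝ) (Y \ X).card
      linarith [hMz]
    have ha' : (X \ Y) = ∅ := Finset.card_eq_zero.mp (by exact_mod_cast ha)
    have hb' : (Y \ X) = ∅ := Finset.card_eq_zero.mp (by exact_mod_cast hb)
    exact Finset.Subset.antisymm (Finset.sdiff_eq_empty_iff_subset.mp ha')
      (Finset.sdiff_eq_empty_iff_subset.mp hb')
  have hδself : ∀ X : Finset ι, δ X X = 0 := by
    intro X; rw [hδ]; simp
  -- if X ≠ Y then 1 ≤ max
  have hne1 : ∀ X Y : Finset ι, X ≠ Y →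
      (1:ℝ) ≤ max ((X \ Y).card : ℝ) ((Y \ X).card : ℝ) := by
    intro X Y hne
    have h : ¬(X \ Y = ∅ ∧ Y \ X = ∅) := by
      rintro ⟨ha, hb⟩
      exact hne (Finset.Subset.antisymm (Finset.sdiff_eq_empty_iff_subset.mp ha)
        (Finset.sdiff_eq_empty_iff_subset.mp hb))
    rcases not_and_or.mp h with h | h
    · have : 1 ≤ (X \ Y).card := Finset.one_le_card.mpr
        (Finset.nonempty_iff_ne_empty.mpr h)
      calc (1:ℝ) ≤ ((X \ Y).card : ℝ) := by exact_mod_cast this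
        _ ≤ _ := le_max_left _ _
    · have : 1 ≤ (Y \ X).card := Finset.one_le_card.mpr
        (Finset.nonempty_iff_ne_empty.mpr h)
      calc (1:ℝ) ≤ ((Y \ X).card : ℝ) := by exact_mod_cast this
        _ ≤ _ := le_max_right _ _
  -- positivity of the denominator
  have hpos : ∀ X Y : Finset ι, ¬(X = ∅ ∧ Y = ∅) →
      0 < ((X ∩ Y).card : ℝ) + β * δ X Y := by
    intro X Y h
    by_cases hxy : X = Y
    · subst hxy
      have hX : X ≠ ∅ := by tauto
      rw [hδself X, Finset.inter_self]
      have : 0 < X.card := Finset.card_pos.mpr (Finset.nonempty_iff_ne_empty.mpr hX)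
      have : (0:ℝ) < (X.card : ℝ) := by exact_mod_cast this
      linarith
    · have h1 := hne1 X Y hxy
      have h2 := hMle X Y
      have h3 : (0:ℝ) ≤ ((X ∩ Y).card : ℝ) := Nat.cast_nonneg _
      linarith
  -- triangle inequality for δ
  have hδtri : ∀ X Y Z : Finset ι, δ X Y ≤ δ X Z + δ Z Y := by
    intro X Y Z
    have hs1 : (X \ Y).card ≤ (X \ Z).card + (Z \ Y).card := by
      calc (X \ Y).card ≤ ((X \ Z) ∪ (Z \ Y)).card := by
            apply Finset.card_le_card
            intro x hx
            simp only [Finset.mem_sdiff, Finset.mem_union] at *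
            tauto
        _ ≤ _ := Finset.card_union_le _ _
    have hs2 : (Y \ X).card ≤ (Z \ X).card + (Y \ Z).card := by
      calc (Y \ X).card ≤ ((Y \ Z) ∪ (Z \ X)).card := by
            apply Finset.card_le_card
            intro x hx
            simp only [Finset.mem_sdiff, Finset.mem_union] at *
            tauto
        _ ≤ _ := by rw [add_comm]; exact Finset.card_union_le _ _
    have ha0 : ((X \ Y).card : ℝ) ≤ ((X \ Z).card : ℝ) + ((Z \ Y).card : ℝ) := by
      exact_mod_cast hs1
    have hb0 : ((Y \ X).card : ℝ) ≤ ((Z \ X).card : ℝ) + ((Y \ Z).card : ℝ) := by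
      exact_mod_cast hs2
    rw [hδ X Y, hδ X Z, hδ Z Y]
    set a := ((X \ Y).card : ℝ)
    set b := ((Y \ X).card : ℝ)
    set a1 := ((X \ Z).card : ℝ)
    set b1 := ((Z \ X).card : ℝ)
    set a2 := ((Z \ Y).card : ℝ)
    set b2 := ((Y \ Z).card : ℝ)
    have ha : a ≤ a1 + a2 := ha0
    have hb : b ≤ b1 + b2 := hb0
    have hmax : max a b ≤ max a1 b1 + max a2 b2 :=
      max_le (ha.trans (add_le_add (le_max_left _ _) (le_max_left _ _)))
        (hb.trans (add_le_add (le_max_right _ _) (le_max_right _ _)))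
    have e1 : min a b + max a b = a + b := min_add_max a b
    have e2 : min a1 b1 + max a1 b1 = a1 + b1 := min_add_max a1 b1
    have e3 : min a2 b2 + max a2 b2 = a2 + b2 := min_add_max a2 b2
    nlinarith [mul_le_mul_of_nonneg_left hmax (by linarith : (0:ℝ) ≤ 1 - 2*α),
      mul_le_mul_of_nonneg_left (show a + b ≤ a1 + b1 + (a2 + b2) by linarith) h0]
  -- nonnegativity of D
  have hDnn : ∀ X Y : Finset ι, 0 ≤ D X Y := by
    intro X Y
    rw [hD]
    split
    · exact le_refl 0
    · exact div_nonneg (mul_nonneg hβ0.le (hδ0 X Y))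
        (add_nonneg (Nat.cast_nonneg _) (mul_nonneg hβ0.le (hδ0 X Y)))
  refine ⟨hDnn, ?_, ?_, ?_⟩
  · -- D X Y = 0 ↔ X = Y
    intro X Y
    rw [hD]
    by_cases h : X = ∅ ∧ Y = ∅
    · rw [if_pos h]
      simp [h.1, h.2]
    · rw [if_neg h]
      have hp := hpos X Y h
      constructor
      · intro h0
        rcases div_eq_zero_iff.mp h0 with h0 | h0
        · have : δ X Y = 0 := by
            rcases mul_eq_zero.mp h0 with h' | h'
            · exact absurd h' hβ0.ne'
            · exact h'
          exact hδeq X Y this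
        · exact absurd h0 hp.ne'
      · intro hxy
        subst hxy
        rw [hδself X]
        simp
  · -- symmetry
    intro X Y
    have hδs : δ X Y = δ Y X := by
      rw [hδ X Y, hδ Y X, min_comm, max_comm]
    rw [hD X Y, hD Y X, hδs, Finset.inter_comm X Y]
    simp only [and_comm]
  · -- triangle inequality
    intro X Y Z
    by_cases hXY : X = ∅ ∧ Y = ∅
    · rw [hD X Y, if_pos hXY]
      exact add_nonneg (hDnn X Z) (hDnn Z Y)
    · by_cases hXZ : X = ∅ ∧ Z = ∅
      · have e1 : D X Z = 0 := by rw [hD, if_pos hXZ]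
        have e2 : D X Y = D Z Y := by rw [hXZ.1, hXZ.2]
        rw [e1, e2, zero_add]
      · by_cases hZY : Z = ∅ ∧ Y = ∅
        · have e1 : D Z Y = 0 := by rw [hD, if_pos hZY]
          have e2 : D X Y = D X Z := by rw [hZY.1, hZY.2]
          rw [e1, e2, add_zero]
        · rw [hD X Y, if_neg hXY, hD X Z, if_neg hXZ, hD Z Y, if_neg hZY]
          have hc1 : ((X ∩ Z).card : ℝ) ≤ ((X ∩ Y).card : ℝ) + β * δ Z Y := by
            have hsub : (X ∩ Z).card ≤ (X ∩ Y).card + (Z \ Y).card := by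
              calc (X ∩ Z).card ≤ ((X ∩ Y) ∪ (Z \ Y)).card := by
                    apply Finset.card_le_card
                    intro x hx
                    simp only [Finset.mem_inter, Finset.mem_union, Finset.mem_sdiff] at *
                    tauto
                _ ≤ _ := Finset.card_union_le _ _
            have h1 : ((Z \ Y).card : ℝ) ≤ β * δ Z Y :=
              (le_max_left _ _).trans (hMle Z Y)
            have : ((X ∩ Z).card : ℝ) ≤ ((X ∩ Y).card : ℝ) + ((Z \ Y).card : ℝ) := by
              exact_mod_cast hsub
            linarith
          have hc2 : ((Z ∩ Y).card : ℝ) ≤ ((X ∩ Y).card : ℝ) + β * δ X Z := by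
            have hsub : (Z ∩ Y).card ≤ (X ∩ Y).card + (Z \ X).card := by
              calc (Z ∩ Y).card ≤ ((X ∩ Y) ∪ (Z \ X)).card := by
                    apply Finset.card_le_card
                    intro x hx
                    simp only [Finset.mem_inter, Finset.mem_union, Finset.mem_sdiff] at *
                    tauto
                _ ≤ _ := Finset.card_union_le _ _
            have h1 : ((Z \ X).card : ℝ) ≤ β * δ X Z :=
              (le_max_right _ _).trans (hMle X Z)
            have : ((Z ∩ Y).card : ℝ) ≤ ((X ∩ Y).card : ℝ) + ((Z \ X).card : ℝ) := by
              exact_mod_cast hsub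
            linarith
          have htri : β * δ X Y ≤ β * δ X Z + β * δ Z Y := by
            have := mul_le_mul_of_nonneg_left (hδtri X Y Z) hβ0.le
            linarith
          exact stmt13_key _ _ _ _ _ _ (Nat.cast_nonneg _)
            (mul_nonneg hβ0.le (hδ0 X Y)) (mul_nonneg hβ0.le (hδ0 X Z))
            (mul_nonneg hβ0.le (hδ0 Z Y)) htri hc1 hc2
            (hpos X Z hXZ) (hpos Z Y hZY)
end

section
/- For γ > 0, the Tversky dissimilarity d^T_{γ,γ}(X,Y) = 1 - |X∩Y|/(|X∩Y| + γ|X\Y| + γ|Y\X|) (with value 0 if X=Y=∅) is a metric on the powerset of a finite set if and only if γ ≥ 1. -/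
/-!
Write `d(X, Y) = γ |X ∆ Y| / (|X ∩ Y| + γ |X ∆ Y|)`. For `γ ≥ 1` the triangle inequality follows
from that of `|X ∆ Y|`, the monotonicity of `t ↦ t / (n + t)` for `n ≥ 0`, and the bound
`|X ∩ Z| ≤ |X ∩ Y| + |Z ∆ Y| ≤ |X ∩ Y| + γ |Z ∆ Y|`, which makes every denominator on the right at
most `|X ∩ Y| + γ |X ∆ Z| + γ |Z ∆ Y|`. Conversely, for distinct points `x, y` one has
`d({x}, {y}) = 1` while `d({x}, {x, y}) = d({x, y}, {y}) = γ / (1 + γ)`, so `1 ≤ 2γ / (1 + γ)`.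
-/

open Finset
open scoped symmDiff

namespace Finset

variable {α : Type*} [DecidableEq α] (s t u : Finset α)

theorem card_symmDiff : #(s ∆ t) = #(s \ t) + #(t \ s) := by
  rw [symmDiff_def, sup_eq_union, card_union_of_disjoint disjoint_sdiff_sdiff]

theorem card_symmDiff_le : #(s ∆ u) ≤ #(s ∆ t) + #(t ∆ u) :=
  (card_le_card (symmDiff_triangle s t u)).trans (card_union_le _ _)

theorem card_inter_le_card_inter_add_card_symmDiff : #(s ∩ t) ≤ #(s ∩ u) + #(t ∆ u) := by
  refine (card_le_card fun a => ?_).trans (card_union_le _ _)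
  simp only [mem_inter, mem_union, mem_symmDiff]
  tauto

end Finset

theorem div_add_self_le_div_add_self {n a b : ℝ} (hn : 0 ≤ n) (ha : 0 ≤ a) (hab : a ≤ b) :
    a / (n + a) ≤ b / (n + b) := by
  rcases (add_nonneg hn ha).eq_or_lt with h | h
  · rw [← h, div_zero]
    exact div_nonneg (ha.trans hab) (by linarith)
  · rw [div_le_div_iff₀ h (by linarith)]
    nlinarith

theorem div_add_le_div_add_of_le {n m t : ℝ} (hm : 0 ≤ m) (ht : 0 ≤ t) (hnm : m ≤ n) :
    t / (n + t) ≤ t / (m + t) := by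
  rcases ht.eq_or_lt with rfl | ht
  · simp
  · exact div_le_div_of_nonneg_left ht.le (by linarith) (by linarith)

theorem div_add_self_triangle {n₁ n₂ n₃ t₁ t₂ t₃ : ℝ} (hn₁ : 0 ≤ n₁) (hn₂ : 0 ≤ n₂) (hn₃ : 0 ≤ n₃)
    (ht₁ : 0 ≤ t₁) (ht₂ : 0 ≤ t₂) (ht₃ : 0 ≤ t₃) (ht : t₁ ≤ t₂ + t₃)
    (h₂ : n₂ ≤ n₁ + t₃) (h₃ : n₃ ≤ n₁ + t₂) :
    t₁ / (n₁ + t₁) ≤ t₂ / (n₂ + t₂) + t₃ / (n₃ + t₃) :=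
  calc t₁ / (n₁ + t₁) ≤ (t₂ + t₃) / (n₁ + (t₂ + t₃)) := div_add_self_le_div_add_self hn₁ ht₁ ht
    _ = t₂ / ((n₁ + t₃) + t₂) + t₃ / ((n₁ + t₂) + t₃) := by
      rw [add_div]; congr 1 <;> congr 1 <;> ring
    _ ≤ t₂ / (n₂ + t₂) + t₃ / (n₃ + t₃) :=
      add_le_add (div_add_le_div_add_of_le hn₂ ht₂ h₂) (div_add_le_div_add_of_le hn₃ ht₃ h₃)

/-- Tversky's dissimilarity `1 - |X ∩ Y| / (|X ∩ Y| + γ |X \ Y| + γ |Y \ X|)` written as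
`γ |X ∆ Y| / (|X ∩ Y| + γ |X ∆ Y|)`; in this form the convention `d(∅, ∅) = 0` is the junk value of
`0 / 0`. -/
noncomputable def tverskyDist {α : Type*} [DecidableEq α] (γ : ℝ) (X Y : Finset α) : ℝ :=
  γ * #(X ∆ Y) / (#(X ∩ Y) + γ * #(X ∆ Y))

namespace tverskyDist

variable {α : Type*} [DecidableEq α] {γ : ℝ}

theorem mul_card_symmDiff_eq_zero_iff (hγ : 0 < γ) {X Y : Finset α} :
    γ * (#(X ∆ Y) : ℝ) = 0 ↔ X = Y := by
  rw [mul_eq_zero, Nat.cast_eq_zero, card_eq_zero, ← bot_eq_empty, symmDiff_eq_bot]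
  simp [hγ.ne']

theorem denom_eq_zero_iff (hγ : 0 < γ) {X Y : Finset α} :
    (#(X ∩ Y) : ℝ) + γ * #(X ∆ Y) = 0 ↔ X = ∅ ∧ Y = ∅ := by
  rw [add_eq_zero_iff_of_nonneg (by positivity) (by positivity), mul_card_symmDiff_eq_zero_iff hγ]
  constructor
  · rintro ⟨h, rfl⟩
    simpa using h
  · rintro ⟨rfl, rfl⟩
    simp

theorem eq_one_sub_div (hγ : 0 < γ) (X Y : Finset α) :
    tverskyDist γ X Y = if X = ∅ ∧ Y = ∅ then 0
      else 1 - (#(X ∩ Y) : ℝ) / (#(X ∩ Y) + γ * #(X \ Y) + γ * #(Y \ X)) := by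
  split_ifs with h
  · simp [tverskyDist, h.1, h.2]
  have hD := mt (denom_eq_zero_iff hγ).1 h
  rw [tverskyDist, card_symmDiff, Nat.cast_add] at *
  rw [add_assoc, ← mul_add, eq_sub_iff_add_eq, ← add_div, div_eq_one_iff_eq hD]
  ring

theorem nonneg (hγ : 0 ≤ γ) (X Y : Finset α) : 0 ≤ tverskyDist γ X Y := by
  unfold tverskyDist; positivity

theorem eq_zero_iff (hγ : 0 < γ) {X Y : Finset α} : tverskyDist γ X Y = 0 ↔ X = Y := by
  rw [tverskyDist, div_eq_zero_iff, mul_card_symmDiff_eq_zero_iff hγ, denom_eq_zero_iff hγ]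
  constructor
  · rintro (h | ⟨rfl, rfl⟩) <;> trivial
  · exact Or.inl

theorem comm (X Y : Finset α) : tverskyDist γ X Y = tverskyDist γ Y X := by
  rw [tverskyDist, tverskyDist, symmDiff_comm, inter_comm]

theorem triangle (hγ : 1 ≤ γ) (X Y Z : Finset α) :
    tverskyDist γ X Y ≤ tverskyDist γ X Z + tverskyDist γ Z Y := by
  have h₁ := card_symmDiff_le X Z Y
  have h₂ := card_inter_le_card_inter_add_card_symmDiff X Z Y
  have h₃ := card_inter_le_card_inter_add_card_symmDiff Y Z X
  rw [inter_comm Y, inter_comm Y, symmDiff_comm Z X] at h₃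
  have hle (n : ℕ) : (n : ℝ) ≤ γ * n := le_mul_of_one_le_left n.cast_nonneg hγ
  apply div_add_self_triangle <;> try positivity
  · rw [← mul_add]
    gcongr
    exact_mod_cast h₁
  · linarith [hle #(Z ∆ Y), (by exact_mod_cast h₂ : (#(X ∩ Z) : ℝ) ≤ #(X ∩ Y) + #(Z ∆ Y))]
  · linarith [hle #(X ∆ Z), (by exact_mod_cast h₃ : (#(Z ∩ Y) : ℝ) ≤ #(X ∩ Y) + #(X ∆ Z))]

theorem singleton_singleton (hγ : 0 < γ) {x y : α} (hxy : x ≠ y) :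
    tverskyDist γ {x} {y} = 1 := by
  simp [tverskyDist, symmDiff_def, hxy, hxy.symm, hγ.ne']

theorem singleton_pair {x y : α} (hxy : x ≠ y) :
    tverskyDist γ {x} {x, y} = γ / (1 + γ) := by
  simp [tverskyDist, symmDiff_def, hxy, sdiff_singleton_eq_erase, erase_eq_of_notMem]

theorem pair_singleton {x y : α} (hxy : x ≠ y) :
    tverskyDist γ {x, y} {y} = γ / (1 + γ) := by
  simp [tverskyDist, symmDiff_def, hxy, hxy.symm, sdiff_singleton_eq_erase]

theorem one_le_of_triangle (hγ : 0 < γ) {x y : α} (hxy : x ≠ y)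
    (h : tverskyDist γ {x} {y} ≤ tverskyDist γ {x} {x, y} + tverskyDist γ {x, y} {y}) :
    1 ≤ γ := by
  rw [singleton_singleton hγ hxy, singleton_pair hxy, pair_singleton hxy, ← add_div,
    le_div_iff₀ (by positivity)] at h
  linarith

end tverskyDist

theorem stmt_18 {ι : Type*} [Fintype ι] [DecidableEq ι] (hcard : 3 ≤ Fintype.card ι)
    (γ : ℝ) (hγ : 0 < γ)
    (dT : Finset ι → Finset ι → ℝ)
    (hdT : ∀ X Y : Finset ι, dT X Y =
      if X = ∅ ∧ Y = ∅ then 0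
      else 1 - ((X ∩ Y).card : ℝ) /
        (((X ∩ Y).card : ℝ) + γ * ((X \ Y).card : ℝ) + γ * ((Y \ X).card : ℝ))) :
    ((∀ X Y, 0 ≤ dT X Y) ∧
     (∀ X Y, dT X Y = 0 ↔ X = Y) ∧
     (∀ X Y, dT X Y = dT Y X) ∧
     (∀ X Y Z, dT X Y ≤ dT X Z + dT Z Y)) ↔ 1 ≤ γ := by
  obtain rfl : dT = tverskyDist γ := by
    ext X Y
    rw [hdT, tverskyDist.eq_one_sub_div hγ]
  constructor
  · rintro ⟨-, -, -, htri⟩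
    obtain ⟨x, y, hxy⟩ := Fintype.exists_pair_of_one_lt_card (α := ι) (by omega)
    exact tverskyDist.one_le_of_triangle hγ hxy (htri _ _ _)
  · intro h1γ
    exact ⟨tverskyDist.nonneg hγ.le, fun _ _ => tverskyDist.eq_zero_iff hγ, tverskyDist.comm,
      tverskyDist.triangle h1γ⟩
end
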